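/- If every agent's centrality C_i satisfies Axiom 1 (increasing), then the complete graph K_n on V is the unique APSN: K_n is an APSN, and no other network is. Dually, if every agent's centrality satisfies Axiom 1′ (decreasing), then the empty graph on V is the unique APSN. -/

import Mathlib

/-!
Adding a missing link `ij` changes `u_i` by `(C_i(g+ij) - C_i(g)) - c`, and deleting a link `ij`
changes it by `c - (C_i(g) - C_i(g-ij))`; as `c → 0⁺` only the signs of these centrality
differences matter. Under Axiom 1 every missing link is eventually profitable to both endpoints,
so only `K_n` can be an APSN, while `K_n` is stable once `c` lies below the smallest of its
finitely many (positive) deletion losses. Under Axiom 1′ every link is profitable to sever at any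
cost, and no link is ever worth adding, so the empty network is the unique APSN.
-/

open SimpleGraph

/-- Degree of vertex `i` in network `g`. -/
noncomputable def deg {V : Type*} (g : SimpleGraph V) (i : V) : ℕ :=
  Nat.card (g.neighborSet i)

/-- The network `g` with the (missing) edge `ij` added. -/
def addE {V : Type*} (g : SimpleGraph V) (i j : V) : SimpleGraph V :=
  g ⊔ SimpleGraph.fromEdgeSet {s(i, j)}

/-- The network `g` with the edge `ij` removed. -/
def delE {V : Type*} (g : SimpleGraph V) (i j : V) : SimpleGraph V :=
  g.deleteEdges {s(i, j)}

/-- Utility of agent `i` in the game with centralities `C` and edge cost `c`. -/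
noncomputable def util {V : Type*} (C : V → SimpleGraph V → ℝ) (c : ℝ) (i : V)
    (g : SimpleGraph V) : ℝ :=
  C i g - c * (deg g i)

/-- Adding the missing edge `ij` is an improving move. -/
def ImprovingAdd {V : Type*} (C : V → SimpleGraph V → ℝ) (c : ℝ) (g : SimpleGraph V)
    (i j : V) : Prop :=
  util C c i (addE g i j) ≥ util C c i g ∧ util C c j (addE g i j) ≥ util C c j g ∧
    (util C c i (addE g i j) > util C c i g ∨ util C c j (addE g i j) > util C c j g)

/-- Deleting the edge `ij` is an improving move. -/
def ImprovingDel {V : Type*} (C : V → SimpleGraph V → ℝ) (c : ℝ) (g : SimpleGraph V)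
    (i j : V) : Prop :=
  util C c i (delE g i j) > util C c i g ∨ util C c j (delE g i j) > util C c j g

/-- `g` is pairwise stable at edge cost `c`. -/
def PairwiseStable {V : Type*} (C : V → SimpleGraph V → ℝ) (c : ℝ) (g : SimpleGraph V) : Prop :=
  (∀ i j : V, i ≠ j → ¬ g.Adj i j → ¬ ImprovingAdd C c g i j) ∧
  (∀ i j : V, g.Adj i j → ¬ ImprovingDel C c g i j)

/-- `g` is asymptotically pairwise stable. -/
def APSN {V : Type*} (C : V → SimpleGraph V → ℝ) (g : SimpleGraph V) : Prop :=
  ∃ ε₀ : ℝ, 0 < ε₀ ∧ ∀ c : ℝ, 0 < c → c < ε₀ → PairwiseStable C c g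

/-- Axiom 1: the centrality of agent `i` is increasing. -/
def Axiom1 {V : Type*} (C : V → SimpleGraph V → ℝ) (i : V) : Prop :=
  ∀ (g : SimpleGraph V) (j : V), j ≠ i → ¬ g.Adj i j → C i (addE g i j) > C i g

/-- Axiom 1′: the centrality of agent `i` is decreasing. -/
def Axiom1' {V : Type*} (C : V → SimpleGraph V → ℝ) (i : V) : Prop :=
  ∀ (g : SimpleGraph V) (j : V), j ≠ i → ¬ g.Adj i j → C i (addE g i j) < C i g

/-- Axiom 2: the centrality of agent `i` is componentwise. -/
def Axiom2 {V : Type*} (C : V → SimpleGraph V → ℝ) (i : V) : Prop :=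
  ∀ (g : SimpleGraph V) (j : V), j ≠ i → ¬ g.Adj i j →
    ((g.Reachable i j → C i (addE g i j) > C i g) ∧
     (¬ g.Reachable i j → C i (addE g i j) ≤ C i g))

/-- Axiom 2′: the centrality of agent `i` is peripheral. -/
def Axiom2' {V : Type*} (C : V → SimpleGraph V → ℝ) (i : V) : Prop :=
  ∀ (g : SimpleGraph V) (j : V), j ≠ i → ¬ g.Adj i j →
    ((g.Reachable i j → C i (addE g i j) ≤ C i g) ∧
     (¬ g.Reachable i j → C i (addE g i j) > C i g))

/-- The centrality of agent `i` is degree homophilic with (strictly increasing) `f`. -/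
def DegreeHomophilic {V : Type*} (C : V → SimpleGraph V → ℝ) (i : V) (f : ℕ → ℤ) : Prop :=
  ∀ (g : SimpleGraph V) (j : V), j ≠ i → ¬ g.Adj i j →
    (C i (addE g i j) > C i g ↔ (deg g j : ℤ) ≤ f (deg g i))

section Network

variable {V : Type*} {g : SimpleGraph V} {i j : V}

lemma addE_comm (g : SimpleGraph V) (i j : V) : addE g i j = addE g j i := by
  rw [addE, addE, Sym2.eq_swap]

lemma delE_comm (g : SimpleGraph V) (i j : V) : delE g i j = delE g j i := by
  rw [delE, delE, Sym2.eq_swap]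

lemma not_adj_delE (g : SimpleGraph V) (i j : V) : ¬ (delE g i j).Adj i j := by
  simp [delE]

lemma addE_delE (h : g.Adj i j) : addE (delE g i j) i j = g := by
  ext a b
  by_cases hab : s(a, b) = s(i, j)
  · rcases Sym2.eq_iff.mp hab with ⟨rfl, rfl⟩ | ⟨rfl, rfl⟩
    · simp [addE, delE, h, h.ne]
    · simp [addE, delE, h.symm, h.ne.symm]
  · simp [addE, delE, hab]

lemma neighborSet_addE (hij : i ≠ j) :
    (addE g i j).neighborSet i = insert j (g.neighborSet i) := by
  ext b
  simp only [mem_neighborSet, addE, sup_adj, fromEdgeSet_adj, Set.mem_singleton_iff,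
    Set.mem_insert_iff, Sym2.eq_iff]
  aesop

lemma neighborSet_delE (hij : i ≠ j) :
    (delE g i j).neighborSet i = g.neighborSet i \ {j} := by
  ext b
  simp only [mem_neighborSet, delE, deleteEdges_adj, Set.mem_singleton_iff, Set.mem_sdiff,
    Sym2.eq_iff]
  aesop

variable [Finite V]

lemma deg_addE (hij : i ≠ j) (h : ¬ g.Adj i j) : deg (addE g i j) i = deg g i + 1 := by
  rw [deg, deg, Nat.card_coe_set_eq, Nat.card_coe_set_eq, neighborSet_addE hij,
    Set.ncard_insert_of_notMem (by simpa using h)]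

lemma deg_delE_add_one (h : g.Adj i j) : deg (delE g i j) i + 1 = deg g i := by
  rw [deg, deg, Nat.card_coe_set_eq, Nat.card_coe_set_eq, neighborSet_delE h.ne,
    Set.ncard_sdiff_singleton_add_one (by simpa using h)]

end Network

section Game

open Filter Topology

variable {V : Type*} {C : V → SimpleGraph V → ℝ} {c : ℝ} {g : SimpleGraph V} {i j : V}

lemma Axiom1.centrality_delE_lt (hC : Axiom1 C i) (h : g.Adj i j) :
    C i (delE g i j) < C i g := by
  simpa [addE_delE h] using hC (delE g i j) j h.ne.symm (not_adj_delE g i j)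

lemma Axiom1'.centrality_lt_delE (hC : Axiom1' C i) (h : g.Adj i j) :
    C i g < C i (delE g i j) := by
  simpa [addE_delE h] using hC (delE g i j) j h.ne.symm (not_adj_delE g i j)

lemma apsn_iff_eventually : APSN C g ↔ ∀ᶠ c in 𝓝[>] (0 : ℝ), PairwiseStable C c g := by
  simp [APSN, (nhdsGT_basis (0 : ℝ)).eventually_iff, and_imp]

variable [Finite V]

lemma util_addE_sub (hij : i ≠ j) (h : ¬ g.Adj i j) :
    util C c i (addE g i j) - util C c i g = C i (addE g i j) - C i g - c := by
  rw [util, util, deg_addE hij h]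
  push_cast
  ring

lemma util_delE_sub (h : g.Adj i j) :
    util C c i (delE g i j) - util C c i g = c - (C i g - C i (delE g i j)) := by
  rw [util, util, ← deg_delE_add_one h]
  push_cast
  ring

lemma improvingAdd_iff (hij : i ≠ j) (h : ¬ g.Adj i j) :
    ImprovingAdd C c g i j ↔
      c ≤ C i (addE g i j) - C i g ∧ c ≤ C j (addE g i j) - C j g ∧
        (c < C i (addE g i j) - C i g ∨ c < C j (addE g i j) - C j g) := by
  have hi := util_addE_sub (C := C) (c := c) hij h
  have hj := util_addE_sub (C := C) (c := c) hij.symm (fun h' => h h'.symm)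
  rw [← addE_comm] at hj
  constructor <;> rintro ⟨h₁, h₂, h₃⟩ <;>
    exact ⟨by linarith, by linarith, h₃.imp (fun _ => by linarith) (fun _ => by linarith)⟩

lemma improvingDel_iff (h : g.Adj i j) :
    ImprovingDel C c g i j ↔
      C i g - C i (delE g i j) < c ∨ C j g - C j (delE g i j) < c := by
  have hi := util_delE_sub (C := C) (c := c) h
  have hj := util_delE_sub (C := C) (c := c) h.symm
  rw [← delE_comm] at hj
  exact or_congr (by constructor <;> intro <;> linarith) (by constructor <;> intro <;> linarith)

lemma eventually_improvingAdd (hij : i ≠ j) (h : ¬ g.Adj i j)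
    (hi : C i g < C i (addE g i j)) (hj : C j g < C j (addE g i j)) :
    ∀ᶠ c in 𝓝[>] (0 : ℝ), ImprovingAdd C c g i j := by
  have hlt : ∀ᶠ c in 𝓝 (0 : ℝ),
      c < C i (addE g i j) - C i g ∧ c < C j (addE g i j) - C j g :=
    (eventually_lt_nhds (sub_pos.2 hi)).and (eventually_lt_nhds (sub_pos.2 hj))
  filter_upwards [eventually_nhdsWithin_of_eventually_nhds hlt] with c ⟨hci, hcj⟩
  exact (improvingAdd_iff hij h).2 ⟨hci.le, hcj.le, Or.inl hci⟩

lemma eventually_not_improvingDel (hg : ∀ i j, g.Adj i j → C i (delE g i j) < C i g) :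
    ∀ᶠ c in 𝓝[>] (0 : ℝ), ∀ i j, g.Adj i j → ¬ ImprovingDel C c g i j := by
  have hlt : ∀ᶠ c in 𝓝[>] (0 : ℝ), ∀ i j, g.Adj i j → c < C i g - C i (delE g i j) := by
    simp only [eventually_all]
    exact fun i j h =>
      eventually_nhdsWithin_of_eventually_nhds (eventually_lt_nhds (sub_pos.2 (hg i j h)))
  filter_upwards [hlt] with c hc i j h
  have hji := hc j i h.symm
  rw [delE_comm] at hji
  rw [improvingDel_iff h]
  rintro (h' | h') <;> linarith [hc i j h]

lemma apsn_top (hC : ∀ i, Axiom1 C i) : APSN C ⊤ := by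
  rw [apsn_iff_eventually]
  filter_upwards [eventually_not_improvingDel fun i j h => (hC i).centrality_delE_lt h]
    with c hc
  exact ⟨fun i j hij h => (h hij).elim, hc⟩

lemma eq_top_of_apsn (hC : ∀ i, Axiom1 C i) (hg : APSN C g) : g = ⊤ := by
  by_contra hne
  obtain ⟨i, j, hij, h⟩ := ne_top_iff_exists_not_adj.1 hne
  have hi := hC i g j hij.symm h
  have hj := hC j g i hij (fun h' => h h'.symm)
  rw [← addE_comm] at hj
  obtain ⟨c, hc, hadd⟩ :=
    ((apsn_iff_eventually.1 hg).and (eventually_improvingAdd hij h hi hj)).exists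
  exact hc.1 i j hij h hadd

lemma apsn_bot (hC : ∀ i, Axiom1' C i) : APSN C ⊥ := by
  refine ⟨1, one_pos, fun c hc _ => ⟨fun i j hij h hadd => ?_, fun i j h => h.elim⟩⟩
  have hi := hC i ⊥ j hij.symm h
  linarith [((improvingAdd_iff hij h).1 hadd).1]

lemma eq_bot_of_apsn (hC : ∀ i, Axiom1' C i) (hg : APSN C g) : g = ⊥ := by
  obtain ⟨c, hc, hpos⟩ := ((apsn_iff_eventually.1 hg).and self_mem_nhdsWithin).exists
  refine eq_bot_iff_forall_not_adj.2 fun i j h => hc.2 i j h ((improvingDel_iff h).2 ?_)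
  left
  linarith [(hC i).centrality_lt_delE h, hpos]

end Game

theorem statement_19 {V : Type*} [Fintype V] (C : V → SimpleGraph V → ℝ) :
    ((∀ i, Axiom1 C i) →
      (APSN C (⊤ : SimpleGraph V) ∧ ∀ g : SimpleGraph V, APSN C g → g = ⊤)) ∧
    ((∀ i, Axiom1' C i) →
      (APSN C (⊥ : SimpleGraph V) ∧ ∀ g : SimpleGraph V, APSN C g → g = ⊥)) :=
  ⟨fun hC => ⟨apsn_top hC, fun _ => eq_top_of_apsn hC⟩,
    fun hC => ⟨apsn_bot hC, fun _ => eq_bot_of_apsn hC⟩⟩
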